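/- arXiv:0905.0287 — 5 statements merged into one kernel-verified Lean document; each statement's English description precedes it below -/
import Mathlib

section
/- Let A be a real unital Banach algebra and let B : ℝ → A be continuous. Then there exists a unique differentiable map g : ℝ → A such that g(0) = 1 and g'(t) = −B(t)·g(t) for all t ∈ ℝ; moreover g(t) is invertible in A for every t. (This solution is the multiplicative integral of −B, underlying the multiplicative direct image construction.) -/
/-!
Writing `L t` for left multiplication by `-B t`, the equation is the linear ODE `g' = L t g` with
`L` a continuous family of bounded operators. Picard–Lindelöf gives solutions on intervals whose
length depends only on a bound for `‖L‖`, so a bounded `L` has solutions on every interval, and a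
general `L` is made bounded by freezing it outside a compact interval. Gronwall uniqueness glues
these into a unique global solution.

For invertibility, let `h` solve `h' = h B`, `h 0 = 1`: then `(h g)' = 0`, so `h g = 1`, while
`g h` and `1` both solve `u' = -B u + u B`, so `g h = 1`.
-/

open Set Filter

section IntegralCurve

variable {E : Type*} [NormedAddCommGroup E] [NormedSpace ℝ E]

theorem IsIntegralCurveOn.piecewise_union {γ γ' : ℝ → E} {v : ℝ → E → E} {s s' : Set ℝ}
    [DecidablePred (· ∈ s)] (hγ : IsIntegralCurveOn γ v s) (hγ' : IsIntegralCurveOn γ' v s')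
    (hs : IsOpen s) (hs' : IsOpen s') (h : EqOn γ γ' (s ∩ s')) :
    IsIntegralCurveOn (s.piecewise γ γ') v (s ∪ s') := by
  have hleft : EqOn (s.piecewise γ γ') γ s := piecewise_eqOn s γ γ'
  have hright : EqOn (s.piecewise γ γ') γ' s' := fun t ht ↦ by
    by_cases hts : t ∈ s
    · rw [hleft hts, h ⟨hts, ht⟩]
    · exact piecewise_eq_of_notMem _ _ _ hts
  rintro t (ht | ht)
  · rw [hleft ht]
    refine ((hγ t ht).hasDerivAt (hs.mem_nhds ht)).congr_of_eventuallyEq ?_ |>.hasDerivWithinAt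
    exact eventually_of_mem (hs.mem_nhds ht) hleft
  · rw [hright ht]
    refine ((hγ' t ht).hasDerivAt (hs'.mem_nhds ht)).congr_of_eventuallyEq ?_ |>.hasDerivWithinAt
    exact eventually_of_mem (hs'.mem_nhds ht) hright

variable {L : ℝ → E →L[ℝ] E} {γ γ' : ℝ → E} {a b : ℝ}

theorem IsIntegralCurveOn.eqOn_Ioo_of_clm {t₀ : ℝ} (hL : ContinuousOn L (Icc a b))
    (ht₀ : t₀ ∈ Ioo a b)
    (hγ : IsIntegralCurveOn γ (fun t ↦ L t) (Ioo a b))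
    (hγ' : IsIntegralCurveOn γ' (fun t ↦ L t) (Ioo a b)) (h : γ t₀ = γ' t₀) :
    EqOn γ γ' (Ioo a b) := by
  obtain ⟨C, hC⟩ := isCompact_Icc.exists_bound_of_continuousOn hL
  have hlip (t : ℝ) (ht : t ∈ Ioo a b) : LipschitzOnWith C.toNNReal (L t) univ :=
    (ContinuousLinearMap.lipschitzWith_of_opNorm_le <|
      (hC t (Ioo_subset_Icc_self ht)).trans (Real.le_coe_toNNReal C)).lipschitzOnWith
  have hsol {γ : ℝ → E} (hγ : IsIntegralCurveOn γ (fun t ↦ L t) (Ioo a b)) (t : ℝ)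
      (ht : t ∈ Ioo a b) : HasDerivAt γ (L t (γ t)) t ∧ γ t ∈ univ :=
    ⟨(hγ t ht).hasDerivAt (isOpen_Ioo.mem_nhds ht), mem_univ _⟩
  exact ODE_solution_unique_of_mem_Ioo hlip ht₀ (hsol hγ) (hsol hγ') h

theorem IsIntegralCurve.eq_of_clm {t₀ : ℝ} (hL : Continuous L)
    (hγ : IsIntegralCurve γ (fun t ↦ L t)) (hγ' : IsIntegralCurve γ' (fun t ↦ L t))
    (h : γ t₀ = γ' t₀) : γ = γ' := by
  funext t
  set r := |t - t₀| + 1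
  refine (hγ.isIntegralCurveOn _).eqOn_Ioo_of_clm hL.continuousOn (a := t₀ - r) (b := t₀ + r)
    ?_ (hγ'.isIntegralCurveOn _) h ?_
  · constructor <;> linarith [abs_nonneg (t - t₀)]
  · constructor <;> linarith [le_abs_self (t - t₀), neg_abs_le (t - t₀)]

variable [CompleteSpace E] {M ε : ℝ}

theorem exists_isIntegralCurveOn_Icc_clm {t₀ : ℝ} (hL : ContinuousOn L (Icc (t₀ - ε) (t₀ + ε)))
    (hM : ∀ t ∈ Icc (t₀ - ε) (t₀ + ε), ‖L t‖ ≤ M) (hε : 0 ≤ ε) (hMε : M * ε ≤ 1 / 2) (x₀ : E) :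
    ∃ γ : ℝ → E, γ t₀ = x₀ ∧ IsIntegralCurveOn γ (fun t ↦ L t) (Icc (t₀ - ε) (t₀ + ε)) := by
  have ht₀ : t₀ ∈ Icc (t₀ - ε) (t₀ + ε) := ⟨by linarith, by linarith⟩
  have hM₀ : 0 ≤ M := (norm_nonneg _).trans (hM t₀ ht₀)
  -- on the ball of radius `‖x₀‖ + 1` the field is bounded by `M (2‖x₀‖ + 1)`, and `M ε ≤ 1/2`
  -- keeps the Picard iterates inside that ball
  have hpl : IsPicardLindelof (fun t x ↦ L t x) (⟨t₀, ht₀⟩ : Icc (t₀ - ε) (t₀ + ε)) x₀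
      (‖x₀‖₊ + 1) 0 (M * (2 * ‖x₀‖ + 1)).toNNReal M.toNNReal := by
    refine ⟨fun t ht ↦ ?_, fun x _ ↦ ?_, fun t ht x hx ↦ ?_, ?_⟩
    · exact (ContinuousLinearMap.lipschitzWith_of_opNorm_le <|
        (hM t ht).trans (Real.le_coe_toNNReal M)).lipschitzOnWith
    · exact hL.clm_apply continuousOn_const
    · have hx' : ‖x‖ ≤ 2 * ‖x₀‖ + 1 := by
        rw [mem_closedBall_iff_norm, NNReal.coe_add, coe_nnnorm, NNReal.coe_one] at hx
        linarith [norm_le_norm_add_norm_sub' x x₀]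
      rw [Real.coe_toNNReal _ (by positivity)]
      exact (L t).le_of_opNorm_le (hM t ht) x |>.trans (by gcongr)
    · have hmax : max (t₀ + ε - t₀) (t₀ - (t₀ - ε)) = ε := by simp
      simp only [hmax, Real.coe_toNNReal _ (by positivity : 0 ≤ M * (2 * ‖x₀‖ + 1)),
        NNReal.coe_add, coe_nnnorm, NNReal.coe_one, NNReal.coe_zero, sub_zero]
      nlinarith [norm_nonneg x₀]
  exact hpl.exists_eq_forall_mem_Icc_hasDerivWithinAt₀

theorem IsIntegralCurveOn.exists_extend_clm (hL : Continuous L) (hM : ∀ t, ‖L t‖ ≤ M)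
    (hε : 0 < ε) (hMε : M * ε ≤ 1 / 2) (hγ : IsIntegralCurveOn γ (fun t ↦ L t) (Ioo a b))
    {c : ℝ} (hc : c ∈ Ioo a b) :
    ∃ γ' : ℝ → E, EqOn γ' γ (Ioo a b) ∧
      IsIntegralCurveOn γ' (fun t ↦ L t) (Ioo a b ∪ Ioo (c - ε) (c + ε)) := by
  classical
  obtain ⟨η, hηc, hη⟩ := exists_isIntegralCurveOn_Icc_clm (t₀ := c) hL.continuousOn
    (fun t _ ↦ hM t) hε.le hMε (γ c)
  replace hη := hη.mono Ioo_subset_Icc_self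
  have hagree : EqOn γ η (Ioo a b ∩ Ioo (c - ε) (c + ε)) := by
    rw [Ioo_inter_Ioo]
    refine (hγ.mono ?_).eqOn_Ioo_of_clm hL.continuousOn ?_ (hη.mono ?_) hηc.symm
    · exact Ioo_subset_Ioo le_sup_left inf_le_left
    · exact ⟨max_lt hc.1 (by linarith), lt_min hc.2 (by linarith)⟩
    · exact Ioo_subset_Ioo le_sup_right inf_le_right
  exact ⟨_, piecewise_eqOn _ _ _, hγ.piecewise_union hη isOpen_Ioo isOpen_Ioo hagree⟩

theorem exists_isIntegralCurveOn_Ioo_clm_of_norm_le (hL : Continuous L) (hM : ∀ t, ‖L t‖ ≤ M)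
    (t₀ : ℝ) (x₀ : E) (T : ℝ) :
    ∃ γ : ℝ → E, γ t₀ = x₀ ∧ IsIntegralCurveOn γ (fun t ↦ L t) (Ioo (t₀ - T) (t₀ + T)) := by
  -- local solutions live on intervals of radius `2δ`; each step extends the domain by `δ`
  obtain ⟨δ, hδ₀, hMδ⟩ : ∃ δ > 0, M * (2 * δ) ≤ 1 / 2 := by
    have hM₀ : 0 ≤ M := (norm_nonneg _).trans (hM 0)
    refine ⟨1 / (4 * M + 4), by positivity, ?_⟩
    rw [← mul_assoc, mul_one_div, div_le_div_iff₀ (by positivity) (by norm_num)]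
    linarith
  have step (n : ℕ) : ∃ γ : ℝ → E, γ t₀ = x₀ ∧
      IsIntegralCurveOn γ (fun t ↦ L t) (Ioo (t₀ - (n + 1) * δ) (t₀ + (n + 1) * δ)) := by
    induction n with
    | zero =>
      obtain ⟨γ, hγ₀, hγ⟩ := exists_isIntegralCurveOn_Icc_clm (t₀ := t₀) hL.continuousOn
        (fun t _ ↦ hM t) (by positivity) hMδ x₀
      refine ⟨γ, hγ₀, hγ.mono (Ioo_subset_Icc_self.trans (Icc_subset_Icc ?_ ?_))⟩ <;>
        simp only [CharP.cast_eq_zero, zero_add, one_mul] <;> linarith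
    | succ n ih =>
      obtain ⟨γ, hγ₀, hγ⟩ := ih
      have hn : (0 : ℝ) ≤ n := n.cast_nonneg
      obtain ⟨γ₁, hγ₁γ, hγ₁⟩ := hγ.exists_extend_clm hL hM (by positivity) hMδ
        (c := t₀ + n * δ) ⟨by nlinarith, by nlinarith⟩
      replace hγ₁ : IsIntegralCurveOn γ₁ (fun t ↦ L t)
          (Ioo (t₀ - (n + 1) * δ) (t₀ + (n + 2) * δ)) := hγ₁.mono <| by
        rw [Ioo_union_Ioo' (by nlinarith) (by nlinarith)]
        exact Ioo_subset_Ioo (min_le_left _ _) (le_max_of_le_right (by linarith))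
      obtain ⟨γ₂, hγ₂γ₁, hγ₂⟩ := hγ₁.exists_extend_clm hL hM (by positivity) hMδ
        (c := t₀ - n * δ) ⟨by nlinarith, by nlinarith⟩
      refine ⟨γ₂, ?_, hγ₂.mono ?_⟩
      · rw [hγ₂γ₁ ⟨by nlinarith, by nlinarith⟩, hγ₁γ ⟨by nlinarith, by nlinarith⟩, hγ₀]
      · rw [Ioo_union_Ioo' (by nlinarith) (by nlinarith)]
        push_cast
        exact Ioo_subset_Ioo (min_le_of_right_le (by linarith)) (le_max_of_le_left (by linarith))
  obtain ⟨n, hn⟩ := exists_nat_ge (T / δ)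
  obtain ⟨γ, hγ₀, hγ⟩ := step n
  have hT : T ≤ (n + 1) * δ := by
    rw [div_le_iff₀ hδ₀] at hn
    nlinarith
  exact ⟨γ, hγ₀, hγ.mono (Ioo_subset_Ioo (by linarith) (by linarith))⟩

theorem exists_isIntegralCurveOn_Ioo_clm (hL : Continuous L) (t₀ : ℝ) (x₀ : E) (T : ℝ) :
    ∃ γ : ℝ → E, γ t₀ = x₀ ∧ IsIntegralCurveOn γ (fun t ↦ L t) (Ioo (t₀ - T) (t₀ + T)) := by
  have hT : t₀ - |T| ≤ t₀ + |T| := by linarith [abs_nonneg T]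
  have hsub : Ioo (t₀ - T) (t₀ + T) ⊆ Icc (t₀ - |T|) (t₀ + |T|) := fun t ht ↦
    ⟨by linarith [ht.1, le_abs_self T], by linarith [ht.2, le_abs_self T]⟩
  -- freeze `L` outside `Icc (t₀ - |T|) (t₀ + |T|)` to make it bounded
  set L' : ℝ → E →L[ℝ] E := fun t ↦ L (projIcc _ _ hT t)
  obtain ⟨C, hC⟩ := isCompact_Icc.exists_bound_of_continuousOn hL.continuousOn
  obtain ⟨γ, hγ₀, hγ⟩ := exists_isIntegralCurveOn_Ioo_clm_of_norm_le (L := L')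
    (hL.comp (continuous_subtype_val.comp continuous_projIcc)) (fun t ↦ hC _ (projIcc _ _ hT t).2)
    t₀ x₀ T
  refine ⟨γ, hγ₀, fun t ht ↦ ?_⟩
  simpa only [L', projIcc_of_mem hT (hsub ht)] using hγ t ht

theorem exists_isIntegralCurve_clm (hL : Continuous L) (t₀ : ℝ) (x₀ : E) :
    ∃ γ : ℝ → E, γ t₀ = x₀ ∧ IsIntegralCurve γ (fun t ↦ L t) := by
  choose γ hγ₀ hγ using exists_isIntegralCurveOn_Ioo_clm hL t₀ x₀
  have hmem (t T : ℝ) : t ∈ Ioo (t₀ - T) (t₀ + T) ↔ |t - t₀| < T := by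
    rw [abs_sub_lt_iff, mem_Ioo]
    constructor <;> rintro ⟨h₁, h₂⟩ <;> constructor <;> linarith
  have hagree (T T' t : ℝ) (hT : |t - t₀| < T) (hT' : |t - t₀| < T') : γ T t = γ T' t := by
    have hsub (S : ℝ) (hS : min T T' ≤ S) :
        Ioo (t₀ - min T T') (t₀ + min T T') ⊆ Ioo (t₀ - S) (t₀ + S) :=
      Ioo_subset_Ioo (by linarith) (by linarith)
    have hpos : 0 < min T T' := lt_min ((abs_nonneg _).trans_lt hT) ((abs_nonneg _).trans_lt hT')
    refine ((hγ T).mono (hsub T (min_le_left _ _))).eqOn_Ioo_of_clm hL.continuousOn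
      ((hmem _ _).2 (by rwa [sub_self, abs_zero])) ((hγ T').mono (hsub T' (min_le_right _ _)))
      ((hγ₀ T).trans (hγ₀ T').symm) ((hmem _ _).2 (lt_min hT hT'))
  refine ⟨fun t ↦ γ (|t - t₀| + 1) t, by simpa using hγ₀ 1, fun t ↦ ?_⟩
  have ht : t ∈ Ioo (t₀ - (|t - t₀| + 1)) (t₀ + (|t - t₀| + 1)) := (hmem _ _).2 (lt_add_one _)
  refine ((hγ _ t ht).hasDerivAt (isOpen_Ioo.mem_nhds ht)).congr_of_eventuallyEq ?_
  filter_upwards [isOpen_Ioo.mem_nhds ht] with s hs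
  exact hagree _ _ s (lt_add_one _) ((hmem _ _).1 hs)

end IntegralCurve

section BanachAlgebra

variable {A : Type*} [NormedRing A] [NormedAlgebra ℝ A] [CompleteSpace A]

open ContinuousLinearMap in
theorem isUnit_of_hasDerivAt_mul_left {C g : ℝ → A} {t₀ : ℝ} (hC : Continuous C)
    (hg : ∀ t, HasDerivAt g (C t * g t) t) (hg₀ : g t₀ = 1) (t : ℝ) : IsUnit (g t) := by
  obtain ⟨h, hh₀, hh⟩ := exists_isIntegralCurve_clm (L := fun s ↦ (mul ℝ A).flip (-C s))
    ((mul ℝ A).flip.continuous.comp hC.neg) t₀ 1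
  -- `h' = -h C` makes `h g` constant
  have hleft : h t * g t = 1 := by
    have hderiv (s : ℝ) : HasDerivAt (h * g) 0 s := by
      refine (hh s).mul (hg s) |>.congr_deriv ?_
      simp only [flip_apply, mul_apply', mul_neg, neg_mul, mul_assoc, neg_add_cancel]
    simpa [hh₀, hg₀] using is_const_of_deriv_eq_zero (fun s ↦ (hderiv s).differentiableAt)
      (fun s ↦ (hderiv s).deriv) t t₀
  -- `g h` and `1` both solve `u' = C u - u C`
  have hright : g * h = fun _ ↦ 1 := by
    refine IsIntegralCurve.eq_of_clm (L := fun s ↦ mul ℝ A (C s) - (mul ℝ A).flip (C s))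
      (t₀ := t₀) (by fun_prop) (fun s ↦ ?_) (fun s ↦ ?_) (by simp [hg₀, hh₀])
    · refine (hg s).mul (hh s) |>.congr_deriv ?_
      simp [mul_assoc, sub_eq_add_neg]
    · exact (hasDerivAt_const s (1 : A)).congr_deriv (by simp)
  exact isUnit_iff_exists.2 ⟨h t, congrFun hright t, hleft⟩

end BanachAlgebra

/-- **Multiplicative integral / existence and uniqueness of the solution of the
Cauchy problem `g 0 = 1`, `g' t = -(B t) * g t`** in a real unital Banach algebra `A`,
for a continuous `B : ℝ → A`.  Moreover, every value `g t` is invertible (a unit of `A`). -/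
theorem multiplicative_integral_exists_unique
    {A : Type*} [NormedRing A] [NormedAlgebra ℝ A] [CompleteSpace A]
    (B : ℝ → A) (hB : Continuous B) :
    ∃ g : ℝ → A,
      (Differentiable ℝ g ∧ g 0 = 1 ∧ ∀ t : ℝ, deriv g t = -(B t) * g t) ∧
      (∀ t : ℝ, IsUnit (g t)) ∧
      (∀ h : ℝ → A,
        (Differentiable ℝ h ∧ h 0 = 1 ∧ ∀ t : ℝ, deriv h t = -(B t) * h t) → h = g) := by
  have hL : Continuous fun t ↦ ContinuousLinearMap.mul ℝ A (-B t) :=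
    (ContinuousLinearMap.mul ℝ A).continuous.comp hB.neg
  obtain ⟨g, hg₀, hg⟩ := exists_isIntegralCurve_clm hL 0 1
  refine ⟨g, ⟨fun t ↦ (hg t).differentiableAt, hg₀, fun t ↦ (hg t).deriv⟩,
    isUnit_of_hasDerivAt_mul_left hB.neg hg hg₀, ?_⟩
  rintro h ⟨hh, hh₀, hh'⟩
  have hh'' : IsIntegralCurve h fun t ↦ ContinuousLinearMap.mul ℝ A (-B t) := fun t ↦ by
    simpa [hh' t] using (hh t).hasDerivAt
  exact hh''.eq_of_clm hL hg (hh₀.trans hg₀.symm)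
end

section
/- Let A be a real unital Banach algebra, B : ℝ → A continuous, and let g, h : ℝ → A be differentiable maps with g(0) = h(0) = 1, g'(t) = −B(t)·g(t) and h'(t) = h(t)·B(t) for all t. Then h(t)·g(t) = 1 and g(t)·h(t) = 1 for all t ∈ ℝ; in particular every g(t) is a unit with inverse h(t). -/
/-! `h * g` has derivative `h B g - h B g = 0`, so `h t * g t = 1` for all `t`. Consequently
`g t * h t` is an idempotent depending continuously on `t` and equal to `1` at `t = 0`.
An idempotent `p` with `‖1 - p‖ < 1` is `1`, because `q = 1 - p` satisfies `‖q‖ = ‖q²‖ ≤ ‖q‖²`;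
so `{t | g t * h t = 1}` is clopen and nonempty, hence all of `ℝ`. -/

theorem IsIdempotentElem.eq_zero_of_norm_lt_one {A : Type*} [NonUnitalNormedRing A] {q : A}
    (hq : IsIdempotentElem q) (hlt : ‖q‖ < 1) : q = 0 := by
  have hle : ‖q‖ ≤ ‖q‖ * ‖q‖ := by
    calc ‖q‖ = ‖q * q‖ := by rw [hq.eq]
      _ ≤ ‖q‖ * ‖q‖ := norm_mul_le q q
  exact norm_eq_zero.mp (by nlinarith [norm_nonneg q])

theorem IsIdempotentElem.eq_one_of_norm_one_sub_lt_one {A : Type*} [NormedRing A] {p : A}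
    (hp : IsIdempotentElem p) (hlt : ‖1 - p‖ < 1) : p = 1 :=
  (sub_eq_zero.mp (hp.one_sub.eq_zero_of_norm_lt_one hlt)).symm

theorem eq_one_of_continuous_of_isIdempotentElem {X A : Type*} [TopologicalSpace X]
    [PreconnectedSpace X] [NormedRing A] {p : X → A} (hp : Continuous p)
    (hidem : ∀ x, IsIdempotentElem (p x)) {x₀ : X} (hx₀ : p x₀ = 1) (x : X) : p x = 1 := by
  have hball : {x | p x = 1} = p ⁻¹' Metric.ball 1 1 := by
    ext y
    simp only [Set.mem_ofPred_eq, Set.mem_preimage, Metric.mem_ball, dist_eq_norm']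
    exact ⟨fun hy => by simp [hy], (hidem y).eq_one_of_norm_one_sub_lt_one⟩
  have hclopen : IsClopen {x | p x = 1} :=
    ⟨isClosed_eq hp continuous_const, hball ▸ Metric.isOpen_ball.preimage hp⟩
  exact Set.eq_univ_iff_forall.mp (hclopen.eq_univ ⟨x₀, hx₀⟩) x

theorem mul_eq_mul_of_hasDerivAt_neg_mul_of_hasDerivAt_mul {A : Type*} [NormedRing A]
    [NormedAlgebra ℝ A] {B g h : ℝ → A} (hg : ∀ t, HasDerivAt g (-(B t) * g t) t)
    (hh : ∀ t, HasDerivAt h (h t * B t) t) (t s : ℝ) : h t * g t = h s * g s := by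
  have hderiv : ∀ t, HasDerivAt (h * g) 0 t := fun t => by
    simpa only [neg_mul, mul_neg, mul_assoc, add_neg_cancel] using (hh t).mul (hg t)
  exact is_const_of_deriv_eq_zero (fun t => (hderiv t).differentiableAt)
    (fun t => (hderiv t).deriv) t s

theorem multiplicative_integral_inverse_general
    {A : Type*} [NormedRing A] [NormedAlgebra ℝ A]
    (B : ℝ → A) (g h : ℝ → A)
    (hg : Differentiable ℝ g) (hh : Differentiable ℝ h)
    (hg0 : g 0 = 1) (hh0 : h 0 = 1)
    (hg' : ∀ t : ℝ, deriv g t = -(B t) * g t)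
    (hh' : ∀ t : ℝ, deriv h t = h t * B t) :
    ∀ t : ℝ, h t * g t = 1 ∧ g t * h t = 1 := by
  have hhg (t : ℝ) : h t * g t = 1 := by
    rw [mul_eq_mul_of_hasDerivAt_neg_mul_of_hasDerivAt_mul
      (fun t => hg' t ▸ (hg t).hasDerivAt) (fun t => hh' t ▸ (hh t).hasDerivAt) t 0, hh0, hg0,
      one_mul]
  have hidem (t : ℝ) : IsIdempotentElem (g t * h t) := by
    rw [IsIdempotentElem, mul_assoc, ← mul_assoc (h t), hhg t, one_mul]
  intro t
  exact ⟨hhg t, eq_one_of_continuous_of_isIdempotentElem (hg.continuous.mul hh.continuous)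
    hidem (x₀ := 0) (by rw [Pi.mul_apply, hg0, hh0, one_mul]) t⟩

/-- If `g` solves `g 0 = 1`, `g' = -B·g` and `h` solves `h 0 = 1`, `h' = h·B`, then
`h t * g t = 1` and `g t * h t = 1` for all `t`; in particular every `g t` is a unit
with inverse `h t`. -/
theorem multiplicative_integral_inverse
    {A : Type*} [NormedRing A] [NormedAlgebra ℝ A] [CompleteSpace A]
    (B : ℝ → A) (hB : Continuous B) (g h : ℝ → A)
    (hg : Differentiable ℝ g) (hh : Differentiable ℝ h)
    (hg0 : g 0 = 1) (hh0 : h 0 = 1)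
    (hg' : ∀ t : ℝ, deriv g t = -(B t) * g t)
    (hh' : ∀ t : ℝ, deriv h t = h t * B t) :
    ∀ t : ℝ, h t * g t = 1 ∧ g t * h t = 1 :=
  multiplicative_integral_inverse_general B g h hg hh hg0 hh0 hg' hh'
end

section
/- Let A be a real unital Banach algebra, let ω₁ : ℝ × ℝ → A be C¹, and let g : ℝ × ℝ → A be C² with g(x,0) = 1, every g(x,t) invertible, and ∂_t g(x,t) = −ω₁(x,t)·g(x,t) for all (x,t). Then for every x: g(x,1)⁻¹ · ∂_x g(x,1) = − ∫₀¹ g(x,t)⁻¹ · ∂_x ω₁(x,t) · g(x,t) dt. -/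
/-!
Put `F t = g(x,t)⁻¹ · ∂ₓg(x,t)`. Differentiating `∂ₜg = -ω₁ g` in `x`, and commuting the mixed
partials of the `C²` map `g`, shows that `D t = ∂ₓg(x,t)` solves the variational equation
`D' = -(∂ₓω₁) g - ω₁ D`. Together with `(g⁻¹)' = g⁻¹ ω₁` this gives `F' = -g⁻¹ (∂ₓω₁) g`, and
`F 0 = 0` because `g(·,0) ≡ 1`; the fundamental theorem of calculus concludes.
-/

section InverseDerivative

variable {𝕜 R : Type*} [NontriviallyNormedField 𝕜] [NormedRing R] [HasSummableGeomSeries R]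
  [NormedAlgebra 𝕜 R] {f : 𝕜 → R} {f' : R} {t : 𝕜}

theorem HasDerivAt.inverse (hf : HasDerivAt f f' t) (ht : IsUnit (f t)) :
    HasDerivAt (fun s => Ring.inverse (f s))
      (-(Ring.inverse (f t) * f' * Ring.inverse (f t))) t := by
  obtain ⟨u, hu⟩ := ht
  have h := hasFDerivAt_ringInverse (𝕜 := 𝕜) u
  rw [hu] at h
  refine (h.comp_hasDerivAt t hf).congr_deriv ?_
  simp [← hu]

theorem hasDerivAt_inverse_mul_of_variational_eq {G D : 𝕜 → R} {w w' : R}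
    (hG : HasDerivAt G (-w * G t) t) (hGt : IsUnit (G t))
    (hD : HasDerivAt D (-w' * G t - w * D t) t) :
    HasDerivAt (fun s => Ring.inverse (G s) * D s) (-(Ring.inverse (G t) * w' * G t)) t := by
  refine ((hG.inverse hGt).mul hD).congr_deriv ?_
  have hGG : G t * Ring.inverse (G t) = 1 := Ring.mul_inverse_cancel _ hGt
  calc _ = -(Ring.inverse (G t) * w' * G t)
          + Ring.inverse (G t) * w * (G t * Ring.inverse (G t)) * D t
          - Ring.inverse (G t) * w * D t := by noncomm_ring
    _ = -(Ring.inverse (G t) * w' * G t) := by rw [hGG]; noncomm_ring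

end InverseDerivative

section PartialDerivatives

variable {𝕜 E : Type*} [NontriviallyNormedField 𝕜] [NormedAddCommGroup E] [NormedSpace 𝕜 E]
  {f : 𝕜 × 𝕜 → E} {x t : 𝕜}

theorem DifferentiableAt.hasDerivAt_partial_fst (hf : DifferentiableAt 𝕜 f (x, t)) :
    HasDerivAt (fun u => f (u, t)) (fderiv 𝕜 f (x, t) (1, 0)) x :=
  hf.hasFDerivAt.comp_hasDerivAt x ((hasDerivAt_id x).prodMk (hasDerivAt_const x t))

theorem DifferentiableAt.hasDerivAt_partial_snd (hf : DifferentiableAt 𝕜 f (x, t)) :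
    HasDerivAt (fun s => f (x, s)) (fderiv 𝕜 f (x, t) (0, 1)) t :=
  hf.hasFDerivAt.comp_hasDerivAt t ((hasDerivAt_const t x).prodMk (hasDerivAt_id t))

theorem ContDiff.continuous_deriv_partial_fst (hf : ContDiff 𝕜 1 f) (x : 𝕜) :
    Continuous fun s => deriv (fun u => f (u, s)) x := by
  have hd : Differentiable 𝕜 f := hf.differentiable one_ne_zero
  simp_rw [fun s => ((hd (x, s)).hasDerivAt_partial_fst).deriv]
  exact ((hf.continuous_fderiv one_ne_zero).comp (by fun_prop)).clm_apply continuous_const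

theorem ContDiff.hasDerivAt_partial_snd_partial_fst [IsRCLikeNormedField 𝕜] (hf : ContDiff 𝕜 2 f)
    (x t : 𝕜) :
    HasDerivAt (fun s => deriv (fun u => f (u, s)) x)
      (deriv (fun u => deriv (fun s => f (u, s)) t) x) t := by
  have hd : Differentiable 𝕜 f := hf.differentiable two_ne_zero
  have hd' : Differentiable 𝕜 (fderiv 𝕜 f) :=
    (hf.fderiv_right (m := 1) le_rfl).differentiable one_ne_zero
  simp_rw [fun u s => ((hd (u, s)).hasDerivAt_partial_fst).deriv,
    fun u s => ((hd (u, s)).hasDerivAt_partial_snd).deriv]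
  have hsymm := hf.contDiffAt.isSymmSndFDerivAt (x := (x, t)) (by simp)
  rw [((hd' (x, t)).hasDerivAt_partial_fst.clm_apply (hasDerivAt_const x _)).deriv, hsymm]
  simpa using (hd' (x, t)).hasDerivAt_partial_snd.clm_apply (hasDerivAt_const t _)

end PartialDerivatives

open intervalIntegral in
/-- Integrated form of the key identity: under the same hypotheses,
`g(x,1)⁻¹ · ∂_x g(x,1) = - ∫₀¹ g(x,t)⁻¹ · ∂_x ω₁(x,t) · g(x,t) dt`. -/
theorem inv_deriv_x_eq_neg_integral
    {A : Type*} [NormedRing A] [NormedAlgebra ℝ A] [CompleteSpace A]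
    (ω₁ g : ℝ × ℝ → A)
    (hω₁ : ContDiff ℝ 1 ω₁) (hg : ContDiff ℝ 2 g)
    (hg0 : ∀ x : ℝ, g (x, 0) = 1)
    (hgu : ∀ p : ℝ × ℝ, IsUnit (g p))
    (hgt : ∀ x t : ℝ, deriv (fun s => g (x, s)) t = -(ω₁ (x, t)) * g (x, t)) :
    ∀ x : ℝ,
      Ring.inverse (g (x, 1)) * deriv (fun u => g (u, 1)) x
        = -∫ t in (0:ℝ)..1,
            Ring.inverse (g (x, t)) * deriv (fun u => ω₁ (u, t)) x * g (x, t) := by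
  intro x
  have hgd : Differentiable ℝ g := hg.differentiable two_ne_zero
  have hωd : Differentiable ℝ ω₁ := hω₁.differentiable one_ne_zero
  have hG (t : ℝ) : HasDerivAt (fun s => g (x, s)) (-ω₁ (x, t) * g (x, t)) t :=
    hgt x t ▸ (hgd (x, t)).hasDerivAt_partial_snd.differentiableAt.hasDerivAt
  have hD (t : ℝ) : HasDerivAt (fun s => deriv (fun u => g (u, s)) x)
      (-deriv (fun u => ω₁ (u, t)) x * g (x, t) - ω₁ (x, t) * deriv (fun u => g (u, t)) x) t := by
    refine (hg.hasDerivAt_partial_snd_partial_fst x t).congr_deriv ?_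
    simp_rw [hgt]
    have hωx := (hωd (x, t)).hasDerivAt_partial_fst.differentiableAt.hasDerivAt
    have hgx := (hgd (x, t)).hasDerivAt_partial_fst.differentiableAt.hasDerivAt
    exact (hωx.neg.mul hgx).deriv.trans (by simp [sub_eq_add_neg])
  have hF (t : ℝ) := hasDerivAt_inverse_mul_of_variational_eq (hG t) (hgu _) (hD t)
  have hint : Continuous fun t =>
      Ring.inverse (g (x, t)) * deriv (fun u => ω₁ (u, t)) x * g (x, t) := by
    have hginv : Continuous fun t => Ring.inverse (g (x, t)) :=
      (Differentiable.inverse (fun t => (hG t).differentiableAt) fun t => hgu _).continuous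
    exact (hginv.mul (hω₁.continuous_deriv_partial_fst x)).mul (by fun_prop)
  rw [← integral_neg, integral_eq_sub_of_hasDerivAt (fun t _ => hF t)
    (hint.neg.intervalIntegrable 0 1)]
  simp [hg0]
end

section
/- (Flat case of the non-Abelian homotopy formula over a one-dimensional base.) Let A be a real unital Banach algebra, let ω₀, ω₁ : ℝ × ℝ → A be C¹, and let g : ℝ × ℝ → A be C² with g(x,0) = 1, every g(x,t) invertible, and ∂_t g(x,t) = −ω₁(x,t)·g(x,t) for all (x,t). Assume zero curvature: ∂_t ω₀(x,t) − ∂_x ω₁(x,t) + ω₁(x,t)·ω₀(x,t) − ω₀(x,t)·ω₁(x,t) = 0 for all (x,t). Then for every x, writing g₁ = g(x,1): ω₀(x,1) = g₁ · ω₀(x,0) · g₁⁻¹ − ∂_x g(x,1) · g₁⁻¹; that is, the restrictions of the flat form to t = 1 and t = 0 are gauge-equivalent via g₁. -/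
/-! Fix `x` and put `u(t) = ω₀(x,t) g(x,t) + ∂_x g(x,t)`. Using `∂_t g = -ω₁ g`, the symmetry of
mixed partials of `g` and the zero-curvature equation, `u' = -ω₁ u`: the same linear equation that
`t ↦ g(x,t)` solves. Hence `g(x,t)⁻¹ u(t)` is constant, and comparing `t = 1` with `t = 0`, where
`g = 1` and `∂_x g = 0`, gives `ω₀(x,1) g₁ + ∂_x g(x,1) = g₁ ω₀(x,0)`. -/

section Slices

variable {E : Type*} [NormedAddCommGroup E] [NormedSpace ℝ E] {f : ℝ × ℝ → E}
  {f' : ℝ × ℝ →L[ℝ] E} {x t : ℝ}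

theorem HasFDerivAt.hasDerivAt_fst_slice (hf : HasFDerivAt f f' (x, t)) :
    HasDerivAt (fun u => f (u, t)) (f' (1, 0)) x :=
  hf.comp_hasDerivAt x ((hasDerivAt_id x).prodMk (hasDerivAt_const x t))

theorem HasFDerivAt.hasDerivAt_snd_slice (hf : HasFDerivAt f f' (x, t)) :
    HasDerivAt (fun s => f (x, s)) (f' (0, 1)) t :=
  hf.comp_hasDerivAt t ((hasDerivAt_const t x).prodMk (hasDerivAt_id t))

/-- Symmetry of mixed partials: `∂_t ∂_x f = ∂_x ∂_t f`. -/
theorem ContDiff.hasDerivAt_deriv_fst_slice (hf : ContDiff ℝ 2 f) (x t : ℝ) :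
    HasDerivAt (fun s => deriv (fun u => f (u, s)) x)
      (deriv (fun u => deriv (fun s => f (u, s)) t) x) t := by
  have hf₁ : Differentiable ℝ f := hf.differentiable (by norm_num)
  have hf₂ : Differentiable ℝ (fderiv ℝ f) :=
    (hf.fderiv_right (m := 1) (by norm_num)).differentiable one_ne_zero
  have hfst : (fun s => deriv (fun u => f (u, s)) x) = fun s => fderiv ℝ f (x, s) (1, 0) :=
    funext fun s => (hf₁ (x, s)).hasFDerivAt.hasDerivAt_fst_slice.deriv
  have hsnd : (fun u => deriv (fun s => f (u, s)) t) = fun u => fderiv ℝ f (u, t) (0, 1) :=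
    funext fun u => (hf₁ (u, t)).hasFDerivAt.hasDerivAt_snd_slice.deriv
  have hsymm : fderiv ℝ (fderiv ℝ f) (x, t) (0, 1) (1, 0)
      = fderiv ℝ (fderiv ℝ f) (x, t) (1, 0) (0, 1) :=
    second_derivative_symmetric (fun p => (hf₁ p).hasFDerivAt) (hf₂ (x, t)).hasFDerivAt _ _
  have hD₂ := (hf₂ (x, t)).hasFDerivAt
  have hx : HasDerivAt (fun u => fderiv ℝ f (u, t) (0, 1))
      (fderiv ℝ (fderiv ℝ f) (x, t) (1, 0) (0, 1)) x :=
    (ContinuousLinearMap.apply ℝ E ((0, 1) : ℝ × ℝ)).hasFDerivAt.comp_hasDerivAt x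
      hD₂.hasDerivAt_fst_slice
  rw [hfst, hsnd, hx.deriv, ← hsymm]
  exact (ContinuousLinearMap.apply ℝ E ((1, 0) : ℝ × ℝ)).hasFDerivAt.comp_hasDerivAt t
    hD₂.hasDerivAt_snd_slice

end Slices

section RingInverse

variable {𝕜 R : Type*} [NontriviallyNormedField 𝕜] [NormedRing R] [NormedAlgebra 𝕜 R]
  [HasSummableGeomSeries R]

theorem HasDerivAt.ringInverse {f : 𝕜 → R} {f' : R} {t : 𝕜} (hf : HasDerivAt f f' t)
    (ht : IsUnit (f t)) :
    HasDerivAt (fun s => Ring.inverse (f s))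
      (-(Ring.inverse (f t) * f' * Ring.inverse (f t))) t := by
  obtain ⟨u, hu⟩ := ht
  have hinv := hasFDerivAt_ringInverse (𝕜 := 𝕜) u
  rw [hu] at hinv
  rw [← hu, Ring.inverse_unit]
  exact hinv.comp_hasDerivAt t hf

end RingInverse

theorem ringInverse_mul_eq_of_hasDerivAt {R : Type*} [NormedRing R] [NormedAlgebra ℝ R]
    [HasSummableGeomSeries R] {a g u : ℝ → R}
    (hg : ∀ t, HasDerivAt g (-(a t) * g t) t) (hu : ∀ t, HasDerivAt u (-(a t) * u t) t)
    (hunit : ∀ t, IsUnit (g t)) (s t : ℝ) :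
    Ring.inverse (g s) * u s = Ring.inverse (g t) * u t := by
  have hderiv : ∀ r, HasDerivAt (fun r => Ring.inverse (g r) * u r) 0 r := by
    intro r
    refine (((hg r).ringInverse (hunit r)).mul (hu r)).congr_deriv ?_
    simp only [neg_mul, mul_neg, neg_neg, mul_assoc, Ring.mul_inverse_cancel_left _ _ (hunit r),
      add_neg_cancel]
  exact is_const_of_deriv_eq_zero (fun r => (hderiv r).differentiableAt)
    (fun r => (hderiv r).deriv) s t

section Flat

variable {A : Type*} [NormedRing A] [NormedAlgebra ℝ A] {ω₀ ω₁ g : ℝ × ℝ → A}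

theorem hasDerivAt_mul_add_deriv_fst_of_flat (hω₀ : Differentiable ℝ ω₀)
    (hω₁ : Differentiable ℝ ω₁) (hg : ContDiff ℝ 2 g)
    (hgt : ∀ x t : ℝ, deriv (fun s => g (x, s)) t = -(ω₁ (x, t)) * g (x, t))
    (hflat : ∀ x t : ℝ,
      deriv (fun s => ω₀ (x, s)) t - deriv (fun u => ω₁ (u, t)) x
        + ω₁ (x, t) * ω₀ (x, t) - ω₀ (x, t) * ω₁ (x, t) = 0) (x t : ℝ) :
    HasDerivAt (fun s => ω₀ (x, s) * g (x, s) + deriv (fun u => g (u, s)) x)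
      (-(ω₁ (x, t)) * (ω₀ (x, t) * g (x, t) + deriv (fun u => g (u, t)) x)) t := by
  have hgd : Differentiable ℝ g := hg.differentiable (by norm_num)
  have hω₀t : HasDerivAt (fun s => ω₀ (x, s)) (deriv (fun s => ω₀ (x, s)) t) t :=
    (hω₀ _).hasFDerivAt.hasDerivAt_snd_slice.differentiableAt.hasDerivAt
  have hω₁x : HasDerivAt (fun u => ω₁ (u, t)) (deriv (fun u => ω₁ (u, t)) x) x :=
    (hω₁ _).hasFDerivAt.hasDerivAt_fst_slice.differentiableAt.hasDerivAt
  have hgx : HasDerivAt (fun u => g (u, t)) (deriv (fun u => g (u, t)) x) x :=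
    (hgd _).hasFDerivAt.hasDerivAt_fst_slice.differentiableAt.hasDerivAt
  have hgs : HasDerivAt (fun s => g (x, s)) (-(ω₁ (x, t)) * g (x, t)) t :=
    hgt x t ▸ (hgd _).hasFDerivAt.hasDerivAt_snd_slice.differentiableAt.hasDerivAt
  have hmixed : HasDerivAt (fun s => deriv (fun u => g (u, s)) x)
      (-(deriv (fun u => ω₁ (u, t)) x) * g (x, t) + -(ω₁ (x, t)) * deriv (fun u => g (u, t)) x)
      t := by
    have hprod : HasDerivAt (fun u => -(ω₁ (u, t)) * g (u, t))
        (-(deriv (fun u => ω₁ (u, t)) x) * g (x, t) + -(ω₁ (x, t)) * deriv (fun u => g (u, t)) x)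
        x := hω₁x.neg.mul hgx
    have h := hg.hasDerivAt_deriv_fst_slice x t
    rwa [show (fun u => deriv (fun s => g (u, s)) t) = fun u => -(ω₁ (u, t)) * g (u, t) from
      funext fun u => hgt u t, hprod.deriv] at h
  have hω₀' : deriv (fun s => ω₀ (x, s)) t
      = deriv (fun u => ω₁ (u, t)) x - ω₁ (x, t) * ω₀ (x, t) + ω₀ (x, t) * ω₁ (x, t) := by
    rw [← sub_eq_zero, ← hflat x t]
    abel
  refine ((hω₀t.mul hgs).add hmixed).congr_deriv ?_
  rw [hω₀']
  noncomm_ring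

end Flat

/-- **Flat case of the non-Abelian homotopy formula.**  If the curvature component
`∂_t ω₀ - ∂_x ω₁ + ω₁ ω₀ - ω₀ ω₁` vanishes identically, then the restrictions of the
form to `t = 1` and `t = 0` are gauge-equivalent via `g₁ = g(x,1)`:
`ω₀(x,1) = g₁ ω₀(x,0) g₁⁻¹ - ∂_x g(x,1) · g₁⁻¹`. -/
theorem nonabelian_homotopy_flat
    {A : Type*} [NormedRing A] [NormedAlgebra ℝ A] [CompleteSpace A]
    (ω₀ ω₁ g : ℝ × ℝ → A)
    (hω₀ : ContDiff ℝ 1 ω₀) (hω₁ : ContDiff ℝ 1 ω₁) (hg : ContDiff ℝ 2 g)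
    (hg0 : ∀ x : ℝ, g (x, 0) = 1)
    (hgu : ∀ p : ℝ × ℝ, IsUnit (g p))
    (hgt : ∀ x t : ℝ, deriv (fun s => g (x, s)) t = -(ω₁ (x, t)) * g (x, t))
    (hflat : ∀ x t : ℝ,
      deriv (fun s => ω₀ (x, s)) t - deriv (fun u => ω₁ (u, t)) x
        + ω₁ (x, t) * ω₀ (x, t) - ω₀ (x, t) * ω₁ (x, t) = 0) :
    ∀ x : ℝ,
      ω₀ (x, 1) = g (x, 1) * ω₀ (x, 0) * Ring.inverse (g (x, 1))
        - deriv (fun u => g (u, 1)) x * Ring.inverse (g (x, 1)) := by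
  intro x
  have hgd : Differentiable ℝ g := hg.differentiable (by norm_num)
  have hgs : ∀ t, HasDerivAt (fun s => g (x, s)) (-(ω₁ (x, t)) * g (x, t)) t := fun t =>
    hgt x t ▸ (hgd _).hasFDerivAt.hasDerivAt_snd_slice.differentiableAt.hasDerivAt
  have hconst := ringInverse_mul_eq_of_hasDerivAt hgs
    (hasDerivAt_mul_add_deriv_fst_of_flat (hω₀.differentiable one_ne_zero)
      (hω₁.differentiable one_ne_zero) hg hgt hflat x) (fun t => hgu (x, t)) 1 0
  simp only [hg0, deriv_const', Ring.inverse_one, one_mul, mul_one, add_zero] at hconst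
  have hgauge : ω₀ (x, 1) * g (x, 1) + deriv (fun u => g (u, 1)) x = g (x, 1) * ω₀ (x, 0) := by
    rw [← hconst, Ring.mul_inverse_cancel_left _ _ (hgu (x, 1))]
  rw [← hgauge, add_mul, mul_assoc, Ring.mul_inverse_cancel _ (hgu (x, 1)), mul_one,
    add_sub_cancel_right]
end

section
/- (Uniqueness of the multiplicative primitive up to a constant.) Let A be a real unital Banach algebra, U ⊆ ℝⁿ an open connected set, and g, h : U → A differentiable maps with g(x) and h(x) invertible for every x ∈ U. If ∂_i g(x)·g(x)⁻¹ = ∂_i h(x)·h(x)⁻¹ for all i and all x ∈ U (i.e. g and h have the same Darboux derivative), then there is a unit c of A such that h(x) = g(x)·c for all x ∈ U. -/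
/-- **Uniqueness of the multiplicative primitive up to a constant.**  If two
differentiable invertible-valued maps `g, h` on an open connected `U ⊆ ℝⁿ` have the
same Darboux derivative, i.e. `∂_i g · g⁻¹ = ∂_i h · h⁻¹` on `U` for every `i`, then
`h = g · c` on `U` for some unit `c` of `A`. -/
theorem darboux_derivative_unique_up_to_constant
    {A : Type*} [NormedRing A] [NormedAlgebra ℝ A] [CompleteSpace A]
    {n : ℕ} (U : Set (Fin n → ℝ)) (hU : IsOpen U) (hUconn : IsConnected U)
    (g h : (Fin n → ℝ) → A)
    (hg : DifferentiableOn ℝ g U) (hh : DifferentiableOn ℝ h U)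
    (hgu : ∀ x ∈ U, IsUnit (g x)) (hhu : ∀ x ∈ U, IsUnit (h x))
    (hdarboux : ∀ i : Fin n, ∀ x ∈ U,
      fderiv ℝ g x (Pi.single i 1) * Ring.inverse (g x)
        = fderiv ℝ h x (Pi.single i 1) * Ring.inverse (h x)) :
    ∃ c : Aˣ, ∀ x ∈ U, h x = g x * (c : A) := by
  set k : (Fin n → ℝ) → A := fun x => Ring.inverse (g x) * h x with hk_def
  -- k is differentiable at each point of U with derivative 0
  have key : ∀ x ∈ U, HasFDerivAt k (0 : (Fin n → ℝ) →L[ℝ] A) x := by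
    intro x hx
    obtain ⟨u, hu⟩ := hgu x hx
    obtain ⟨w, hw⟩ := hhu x hx
    have hgd : HasFDerivAt g (fderiv ℝ g x) x :=
      ((hg x hx).differentiableAt (hU.mem_nhds hx)).hasFDerivAt
    have hhd : HasFDerivAt h (fderiv ℝ h x) x :=
      ((hh x hx).differentiableAt (hU.mem_nhds hx)).hasFDerivAt
    have hinv : HasFDerivAt Ring.inverse
        (-(ContinuousLinearMap.mulLeftRight ℝ A ↑u⁻¹ ↑u⁻¹)) (g x) := by
      rw [← hu]; exact hasFDerivAt_ringInverse u
    have hcomp : HasFDerivAt (fun y => Ring.inverse (g y))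
        ((-(ContinuousLinearMap.mulLeftRight ℝ A ↑u⁻¹ ↑u⁻¹)).comp (fderiv ℝ g x)) x :=
      hinv.comp x hgd
    have hmul := hcomp.mul' hhd
    have hzero :
        (Ring.inverse (g x) • fderiv ℝ h x +
          (((-(ContinuousLinearMap.mulLeftRight ℝ A ↑u⁻¹ ↑u⁻¹)).comp
            (fderiv ℝ g x)).smulRight (h x))) = (0 : (Fin n → ℝ) →L[ℝ] A) := by
      apply ContinuousLinearMap.ext
      intro v
      have hbasis : ∀ i : Fin n,
          (Ring.inverse (g x) • fderiv ℝ h x +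
            (((-(ContinuousLinearMap.mulLeftRight ℝ A ↑u⁻¹ ↑u⁻¹)).comp
              (fderiv ℝ g x)).smulRight (h x))) (Pi.single i 1) = 0 := by
        intro i
        have hd := hdarboux i x hx
        have hginv : Ring.inverse (g x) = (↑u⁻¹ : A) := by
          rw [← hu, Ring.inverse_unit]
        have hhinv : Ring.inverse (h x) = (↑w⁻¹ : A) := by
          rw [← hw, Ring.inverse_unit]
        rw [hginv, hhinv] at hd
        simp only [ContinuousLinearMap.add_apply, ContinuousLinearMap.smul_apply,
          ContinuousLinearMap.smulRight_apply, ContinuousLinearMap.comp_apply,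
          ContinuousLinearMap.neg_apply, ContinuousLinearMap.mulLeftRight_apply,
          hginv, hhinv]
        rw [← hw]
        have heq : (↑u⁻¹ : A) * fderiv ℝ g x (Pi.single i 1) * ↑u⁻¹ * ↑w
            = ↑u⁻¹ * fderiv ℝ h x (Pi.single i 1) := by
          calc (↑u⁻¹ : A) * fderiv ℝ g x (Pi.single i 1) * ↑u⁻¹ * ↑w
              = ↑u⁻¹ * ((fderiv ℝ g x (Pi.single i 1) * ↑u⁻¹) * ↑w) := by
                simp [mul_assoc]
            _ = ↑u⁻¹ * ((fderiv ℝ h x (Pi.single i 1) * ↑w⁻¹) * ↑w) := by rw [hd]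
            _ = ↑u⁻¹ * (fderiv ℝ h x (Pi.single i 1) * (↑w⁻¹ * ↑w)) := by
                simp [mul_assoc]
            _ = ↑u⁻¹ * fderiv ℝ h x (Pi.single i 1) := by
                rw [w.inv_mul, mul_one]
        simp only [neg_smul, smul_eq_mul]
        rw [neg_mul, heq, add_neg_cancel]
      -- extend from basis to all v by linearity
      have hrep := LinearMap.pi_apply_eq_sum_univ
        (((Ring.inverse (g x) • fderiv ℝ h x +
          (((-(ContinuousLinearMap.mulLeftRight ℝ A ↑u⁻¹ ↑u⁻¹)).comp
            (fderiv ℝ g x)).smulRight (h x))) : (Fin n → ℝ) →L[ℝ] A)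
          : (Fin n → ℝ) →ₗ[ℝ] A) v
      rw [ContinuousLinearMap.zero_apply]
      rw [ContinuousLinearMap.coe_coe] at hrep
      rw [hrep]
      apply Finset.sum_eq_zero
      intro i _
      have : (fun j => if i = j then (1:ℝ) else 0) = Pi.single i 1 := by
        ext j; simp [Pi.single_apply, eq_comm]
      rw [this, hbasis i, smul_zero]
    rw [← hzero]
    exact hmul
  -- k is locally constant on U
  have hloc : ∀ x ∈ U, ∃ ε > 0, Metric.ball x ε ⊆ U ∧
      ∀ y ∈ Metric.ball x ε, k y = k x := by
    intro x hx
    obtain ⟨ε, hε, hball⟩ := Metric.isOpen_iff.1 hU x hx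
    refine ⟨ε, hε, hball, fun y hy => ?_⟩
    have hconv : Convex ℝ (Metric.ball x ε) := convex_ball x ε
    have hdiff : DifferentiableOn ℝ k (Metric.ball x ε) := fun z hz =>
      ((key z (hball hz)).differentiableAt).differentiableWithinAt
    refine hconv.is_const_of_fderivWithin_eq_zero hdiff (fun z hz => ?_) hy
      (Metric.mem_ball_self hε)
    rw [fderivWithin_of_isOpen Metric.isOpen_ball hz]
    exact (key z (hball hz)).fderiv
  -- pick a base point
  obtain ⟨x₀, hx₀⟩ := hUconn.nonempty
  -- the set where k = k x₀ is all of U by connectedness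
  have hconst : ∀ x ∈ U, k x = k x₀ := by
    set V : Set (Fin n → ℝ) := {x | ∃ ε > 0, Metric.ball x ε ⊆ U ∧
      (∀ y ∈ Metric.ball x ε, k y = k x) ∧ k x = k x₀} with hV_def
    set W : Set (Fin n → ℝ) := {x | ∃ ε > 0, Metric.ball x ε ⊆ U ∧
      (∀ y ∈ Metric.ball x ε, k y = k x) ∧ k x ≠ k x₀} with hW_def
    have hVopen : IsOpen V := by
      rw [Metric.isOpen_iff]
      rintro x ⟨ε, hε, hbU, hconst, hval⟩
      refine ⟨ε, hε, fun y hy => ?_⟩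
      obtain ⟨δ, hδ, hδU, hδc⟩ := hloc y (hbU hy)
      exact ⟨δ, hδ, hδU, hδc, (hconst y hy).trans hval⟩
    have hWopen : IsOpen W := by
      rw [Metric.isOpen_iff]
      rintro x ⟨ε, hε, hbU, hconst, hval⟩
      refine ⟨ε, hε, fun y hy => ?_⟩
      obtain ⟨δ, hδ, hδU, hδc⟩ := hloc y (hbU hy)
      exact ⟨δ, hδ, hδU, hδc, (hconst y hy).trans_ne hval⟩
    have hcover : U ⊆ V ∪ W := by
      intro x hx
      obtain ⟨ε, hε, hbU, hc⟩ := hloc x hx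
      by_cases hval : k x = k x₀
      · exact Or.inl ⟨ε, hε, hbU, hc, hval⟩
      · exact Or.inr ⟨ε, hε, hbU, hc, hval⟩
    have hdisj : U ∩ (V ∩ W) = ∅ := by
      ext x
      simp only [Set.mem_inter_iff, Set.mem_empty_iff_false, iff_false, not_and]
      rintro _ ⟨_, _, _, _, h1⟩ ⟨_, _, _, _, h2⟩
      exact h2 h1
    intro x hx
    by_contra hne
    have hxW : x ∈ W := by
      obtain ⟨ε, hε, hbU, hc⟩ := hloc x hx
      exact ⟨ε, hε, hbU, hc, hne⟩
    have hx₀V : x₀ ∈ V := by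
      obtain ⟨ε, hε, hbU, hc⟩ := hloc x₀ hx₀
      exact ⟨ε, hε, hbU, hc, rfl⟩
    obtain ⟨z, hz⟩ := hUconn.isPreconnected V W hVopen hWopen hcover
      ⟨x₀, hx₀, hx₀V⟩ ⟨x, hx, hxW⟩
    rw [Set.eq_empty_iff_forall_notMem] at hdisj
    exact hdisj z ⟨hz.1, hz.2⟩
  -- construct the unit c
  obtain ⟨u₀, hu₀⟩ := hgu x₀ hx₀
  obtain ⟨w₀, hw₀⟩ := hhu x₀ hx₀
  refine ⟨u₀⁻¹ * w₀, fun x hx => ?_⟩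
  obtain ⟨u, hu⟩ := hgu x hx
  have hkx : k x = k x₀ := hconst x hx
  have hkx₀ : k x₀ = ↑u₀⁻¹ * ↑w₀ := by
    simp only [hk_def, ← hu₀, ← hw₀, Ring.inverse_unit]
  have hkxval : k x = ↑u⁻¹ * h x := by
    simp only [hk_def, ← hu, Ring.inverse_unit]
  have : (↑u⁻¹ : A) * h x = ↑u₀⁻¹ * ↑w₀ := by
    rw [← hkxval, hkx, hkx₀]
  calc h x = ↑u * (↑u⁻¹ * h x) := by rw [← mul_assoc, u.mul_inv, one_mul]
    _ = ↑u * (↑u₀⁻¹ * ↑w₀) := by rw [this]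
    _ = g x * ↑(u₀⁻¹ * w₀) := by rw [hu, Units.val_mul]
end
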